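/- Let w be a word over Fin n and i a letter. If c is canonical with c ~ filter≥i w, and d is canonical with d ~ filter≥i (T_i w), then T_i c = d. (In the paper's notation: T_i Can_{{i,…,n}} w = Can_{{i,…,n}} T_i w.) -/

import Mathlib

/-!
Deleting an occurrence of a letter `i` is allowed when the gap to the previous `i` consists of
letters `> i`, or the gap to the next `i` of letters `< i`. This rewriting system contains the
Kiselman relations, canonical words are irreducible for it, and it is strongly confluent (two
deletions either coincide or can be completed to a common word by at most one more deletion
each), so by Church–Rosser Kiselman-equivalent canonical words are equal.

When all letters are `≥ i`, truncation at `i` sends each Kiselman relation to a Kiselman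
relation or to an equality, and it commutes with `filterGE i`. Hence
`T_i c ~ T_i (filterGE i w) = filterGE i (T_i w) ~ d`, and `T_i c` is canonical as a suffix of
a canonical word, so `T_i c = d`.
-/

variable {n : ℕ}

/-- Generating relation of the Kiselman congruence on words over `Fin n`. -/
inductive KisStep : List (Fin n) → List (Fin n) → Prop
  | idem : ∀ (u v : List (Fin n)) (i : Fin n),
      KisStep (u ++ [i, i] ++ v) (u ++ [i] ++ v)
  | left : ∀ (u v : List (Fin n)) (i j : Fin n), i < j →
      KisStep (u ++ [i, j, i] ++ v) (u ++ [i, j] ++ v)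
  | right : ∀ (u v : List (Fin n)) (i j : Fin n), i < j →
      KisStep (u ++ [j, i, j] ++ v) (u ++ [i, j] ++ v)

/-- The Kiselman congruence: smallest equivalence relation containing `KisStep`. -/
def KisEquiv (x y : List (Fin n)) : Prop := Relation.EqvGen KisStep x y

/-- An infix `[i] ++ u ++ [i]` is special if `u` contains a letter `> i` and a letter `< i`. -/
def Special (i : Fin n) (u : List (Fin n)) : Prop :=
  (∃ j ∈ u, i < j) ∧ (∃ j ∈ u, j < i)

/-- A word is canonical if all its infixes of the form `[i] ++ u ++ [i]` are special. -/
def Canonical (w : List (Fin n)) : Prop :=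
  ∀ (i : Fin n) (u : List (Fin n)), ([i] ++ u ++ [i]) <:+: w → Special i u

/-- Delete all letters strictly smaller than `k`. -/
def filterGE (k : Fin n) (w : List (Fin n)) : List (Fin n) :=
  w.filter (fun a => decide (k ≤ a))

/-- `trunc i w` is the longest suffix of `w` with head `i`, or `[]` if `i ∉ w`. -/
def trunc (i : Fin n) : List (Fin n) → List (Fin n)
  | [] => []
  | a :: t => if a = i then a :: t else trunc i t

/-- Longest suffix of `w` whose head is `< k` (as a natural number), or `[]`. -/
def truncLtN (k : ℕ) : List (Fin n) → List (Fin n)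
  | [] => []
  | a :: t => if (a : ℕ) < k then a :: t else truncLtN k t

/-- `join u v = u⁺ ++ v`, where `u⁻` is the longest suffix of `u` that is a sublist of `v`. -/
def join : List (Fin n) → List (Fin n) → List (Fin n)
  | [], v => v
  | a :: t, v => if (a :: t).Sublist v then v else a :: join t v

/-- The local update function at vertex `i` of the update system `S_n^⋆`. -/
def Fstep (i : Fin n) (s : Fin n → List (Fin n)) : Fin n → List (Fin n) :=
  Function.update s i
    (i :: List.foldr join []
      ((((List.finRange n).filter (fun j => decide (i < j))).reverse).map s))

/-- The evolution induced by a word (rightmost letter acts first). -/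
def Fword (w : List (Fin n)) (s : Fin n → List (Fin n)) : Fin n → List (Fin n) :=
  w.foldr Fstep s

/-- The initial system state `⋆`. -/
def starState : Fin n → List (Fin n) := fun _ => []

open Relation

theorem List.append_singleton_append_cases {α : Type*} :
    ∀ (a : List α) (x : α) (b c : List α) (z : α) (d : List α),
      a ++ [x] ++ b = c ++ [z] ++ d →
      (∃ t, c = a ++ [x] ++ t ∧ b = t ++ [z] ++ d) ∨ (a = c ∧ x = z ∧ b = d) ∨
      (∃ t, a = c ++ [z] ++ t ∧ d = t ++ [x] ++ b)
  | [], _, _, [], _, _, h => by simp_all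
  | [], _, _, _ :: cs, _, _, h => by
      obtain ⟨rfl, rfl⟩ := by simpa using h
      exact .inl ⟨cs, by simp, by simp⟩
  | _ :: as, _, _, [], _, _, h => by
      obtain ⟨rfl, rfl⟩ := by simpa using h
      exact .inr (.inr ⟨as, by simp, by simp⟩)
  | _ :: as, x, b, _ :: cs, z, d, h => by
      obtain ⟨rfl, h⟩ := by simpa using h
      rcases append_singleton_append_cases as x b cs z d (by simpa using h) with
        ⟨t, rfl, rfl⟩ | ⟨rfl, rfl, rfl⟩ | ⟨t, rfl, rfl⟩
      · exact .inl ⟨t, by simp, rfl⟩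
      · exact .inr (.inl ⟨rfl, rfl, rfl⟩)
      · exact .inr (.inr ⟨t, by simp, rfl⟩)

def HigherGapLeft (x : List (Fin n)) (i : Fin n) : Prop :=
  ∃ x' g, x = x' ++ [i] ++ g ∧ ∀ a ∈ g, i < a

def LowerGapRight (y : List (Fin n)) (i : Fin n) : Prop :=
  ∃ g y', y = g ++ [i] ++ y' ∧ ∀ a ∈ g, a < i

def KisDeletable (x : List (Fin n)) (i : Fin n) (y : List (Fin n)) : Prop :=
  HigherGapLeft x i ∨ LowerGapRight y i

def KisReduce (w w' : List (Fin n)) : Prop :=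
  ∃ x i y, w = x ++ [i] ++ y ∧ w' = x ++ y ∧ KisDeletable x i y

section Deletion

variable {x y m : List (Fin n)} {i j : Fin n}

theorem HigherGapLeft.append_right (h : HigherGapLeft x i) (hm : ∀ a ∈ m, i < a) :
    HigherGapLeft (x ++ m) i := by
  obtain ⟨x', g, rfl, hg⟩ := h
  refine ⟨x', g ++ m, by simp, fun a ha => ?_⟩
  rcases List.mem_append.1 ha with ha | ha
  exacts [hg a ha, hm a ha]

theorem LowerGapRight.append_left (h : LowerGapRight y i) (hm : ∀ a ∈ m, a < i) :
    LowerGapRight (m ++ y) i := by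
  obtain ⟨g, y', rfl, hg⟩ := h
  refine ⟨m ++ g, y', by simp, fun a ha => ?_⟩
  rcases List.mem_append.1 ha with ha | ha
  exacts [hm a ha, hg a ha]

theorem HigherGapLeft.delete (h : HigherGapLeft (x ++ [j] ++ m) i) :
    HigherGapLeft (x ++ m) i ∨ (i = j ∧ ∀ a ∈ m, i < a) := by
  obtain ⟨x', g, he, hg⟩ := h
  rcases List.append_singleton_append_cases x j m x' i g he with
    ⟨t, rfl, rfl⟩ | ⟨rfl, rfl, rfl⟩ | ⟨t, rfl, rfl⟩
  · exact .inl ⟨x ++ t, g, by simp, hg⟩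
  · exact .inr ⟨rfl, hg⟩
  · refine .inl ⟨x', t ++ m, by simp, fun a ha => hg a ?_⟩
    simp only [List.mem_append, List.mem_singleton] at ha ⊢
    tauto

theorem LowerGapRight.delete (h : LowerGapRight (m ++ [j] ++ y) i) :
    LowerGapRight (m ++ y) i ∨ (i = j ∧ ∀ a ∈ m, a < i) := by
  obtain ⟨g, y', he, hg⟩ := h
  rcases List.append_singleton_append_cases m j y g i y' he with
    ⟨t, rfl, rfl⟩ | ⟨rfl, rfl, rfl⟩ | ⟨t, rfl, rfl⟩
  · refine .inl ⟨m ++ t, y', by simp, fun a ha => hg a ?_⟩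
    simp only [List.mem_append, List.mem_singleton] at ha ⊢
    tauto
  · exact .inr ⟨rfl, hg⟩
  · exact .inl ⟨g, t ++ y, by simp, hg⟩

theorem HigherGapLeft.eq_nil (h : HigherGapLeft (x ++ [i] ++ m) i) (hm : ∀ a ∈ m, a < i) :
    m = [] := by
  obtain ⟨x', g, he, hg⟩ := h
  rcases List.append_singleton_append_cases x i m x' i g he with
    ⟨t, -, rfl⟩ | ⟨-, -, rfl⟩ | ⟨t, -, rfl⟩
  · exact absurd (hm i (by simp)) (lt_irrefl i)
  · exact List.eq_nil_iff_forall_not_mem.2 fun a ha => lt_irrefl a ((hm a ha).trans (hg a ha))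
  · exact absurd (hg i (by simp)) (lt_irrefl i)

theorem LowerGapRight.eq_nil (h : LowerGapRight (m ++ [i] ++ y) i) (hm : ∀ a ∈ m, i < a) :
    m = [] := by
  obtain ⟨g, y', he, hg⟩ := h
  rcases List.append_singleton_append_cases m i y g i y' he with
    ⟨t, rfl, -⟩ | ⟨rfl, -, -⟩ | ⟨t, rfl, -⟩
  · exact absurd (hg i (by simp)) (lt_irrefl i)
  · exact List.eq_nil_iff_forall_not_mem.2 fun a ha => lt_irrefl a ((hg a ha).trans (hm a ha))
  · exact absurd (hm i (by simp)) (lt_irrefl i)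

theorem KisDeletable.diamond (hi : KisDeletable x i (m ++ [j] ++ y))
    (hj : KisDeletable (x ++ [i] ++ m) j y) :
    (i = j ∧ m = []) ∨ (KisDeletable (x ++ m) j y ∧ KisDeletable x i (m ++ y)) := by
  rcases hi with hi | hi <;> rcases hj with hj | hj
  · rcases hj.delete with hj' | ⟨rfl, hm⟩
    · exact .inr ⟨.inl hj', .inl hi⟩
    · exact .inr ⟨.inl (hi.append_right hm), .inl hi⟩
  · exact .inr ⟨.inr hj, .inl hi⟩
  · rcases hi.delete with hi' | ⟨rfl, hm⟩
    · rcases hj.delete with hj' | ⟨rfl, hm⟩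
      · exact .inr ⟨.inl hj', .inr hi'⟩
      · exact .inl ⟨rfl, hi.eq_nil hm⟩
    · exact .inl ⟨rfl, hj.eq_nil hm⟩
  · rcases hi.delete with hi' | ⟨rfl, hm⟩
    · exact .inr ⟨.inr hj, .inr hi'⟩
    · exact .inr ⟨.inr hj, .inr (hj.append_left hm)⟩

theorem KisDeletable.kisReduce (h : KisDeletable x i y) :
    KisReduce (x ++ [i] ++ y) (x ++ y) :=
  ⟨x, i, y, rfl, rfl, h⟩

theorem kisReduce_join_of_kisDeletable (hi : KisDeletable x i (m ++ [j] ++ y)) (hj : KisDeletable (x ++ [i] ++ m) j y) :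
    ∃ w, ReflGen KisReduce (x ++ m ++ [j] ++ y) w ∧
      ReflGen KisReduce (x ++ [i] ++ m ++ y) w := by
  rcases hi.diamond hj with ⟨rfl, rfl⟩ | ⟨hj', hi'⟩
  · exact ⟨x ++ [i] ++ y, by simp [ReflGen.refl], by simp [ReflGen.refl]⟩
  · refine ⟨x ++ m ++ y, .single hj'.kisReduce, .single ?_⟩
    simpa using hi'.kisReduce

end Deletion

theorem kisReduce_diamond {w w₁ w₂ : List (Fin n)} (h₁ : KisReduce w w₁)
    (h₂ : KisReduce w w₂) :
    ∃ v, ReflGen KisReduce w₁ v ∧ ReflGen KisReduce w₂ v := by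
  obtain ⟨x₁, i, y₁, rfl, rfl, hi⟩ := h₁
  obtain ⟨x₂, j, y₂, he, rfl, hj⟩ := h₂
  rcases List.append_singleton_append_cases x₁ i y₁ x₂ j y₂ he with
    ⟨t, rfl, rfl⟩ | ⟨rfl, -, rfl⟩ | ⟨t, rfl, rfl⟩
  · simpa using kisReduce_join_of_kisDeletable hi hj
  · exact ⟨_, .refl, .refl⟩
  · obtain ⟨v, h₂, h₁⟩ := kisReduce_join_of_kisDeletable hj hi
    exact ⟨v, by simpa using h₁, by simpa using h₂⟩

theorem KisStep.kisReduce {x y : List (Fin n)} (h : KisStep x y) : KisReduce x y := by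
  cases h with
  | idem u v i =>
    simpa using KisDeletable.kisReduce (x := u ++ [i]) (y := v) (.inl ⟨u, [], by simp, by simp⟩)
  | left u v i j hij =>
    simpa using
      KisDeletable.kisReduce (x := u ++ [i, j]) (y := v) (.inl ⟨u, [j], by simp, by simpa⟩)
  | right u v i j hij =>
    simpa using
      KisDeletable.kisReduce (x := u) (y := [i, j] ++ v) (.inr ⟨[i], v, by simp, by simpa⟩)

theorem Canonical.not_kisReduce {c w : List (Fin n)} (hc : Canonical c) : ¬ KisReduce c w := by
  rintro ⟨x, i, y, rfl, -, ⟨x', g, rfl, hg⟩ | ⟨g, y', rfl, hg⟩⟩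
  · obtain ⟨-, a, ha, hai⟩ := hc i g ⟨x', y, by simp⟩
    exact lt_asymm (hg a ha) hai
  · obtain ⟨⟨a, ha, hia⟩, -⟩ := hc i g ⟨x, y', by simp⟩
    exact lt_asymm (hg a ha) hia

theorem Canonical.eq_of_reflTransGen_kisReduce {c w : List (Fin n)} (hc : Canonical c)
    (h : ReflTransGen KisReduce c w) : c = w := by
  rcases h.cases_head with h | ⟨v, hv, -⟩
  exacts [h, (hc.not_kisReduce hv).elim]

theorem Canonical.eq_of_kisEquiv {c d : List (Fin n)} (hc : Canonical c) (hd : Canonical d)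
    (h : KisEquiv c d) : c = d := by
  have church_rosser : Equivalence (Join (ReflTransGen (KisReduce (n := n)))) :=
    equivalence_join_reflTransGen fun _ _ _ h₁ h₂ =>
      (kisReduce_diamond h₁ h₂).imp fun _ h => ⟨h.1, h.2.to_reflTransGen⟩
  obtain ⟨w, hcw, hdw⟩ := church_rosser.eqvGen_iff.1 <|
    EqvGen.mono (fun _ b h => ⟨b, .single h.kisReduce, .refl⟩) _ _ h
  rw [hc.eq_of_reflTransGen_kisReduce hcw, hd.eq_of_reflTransGen_kisReduce hdw]

section Truncation

variable {k : Fin n}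

theorem trunc_append_of_mem {u : List (Fin n)} (hu : k ∈ u) (v : List (Fin n)) :
    trunc k (u ++ v) = trunc k u ++ v := by
  induction u with
  | nil => simp at hu
  | cons a u ih =>
    by_cases hak : a = k
    · simp [trunc, hak]
    · simp [trunc, hak, ih (by simpa [Ne.symm hak] using hu)]

theorem trunc_append_of_not_mem {u : List (Fin n)} (hu : k ∉ u) (v : List (Fin n)) :
    trunc k (u ++ v) = trunc k v := by
  induction u with
  | nil => rfl
  | cons a u ih =>
    have hak : a ≠ k := fun h => hu (by simp [h])
    simp [trunc, hak, ih (by simp_all)]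

theorem trunc_suffix (w : List (Fin n)) : trunc k w <:+ w := by
  induction w with
  | nil => exact List.suffix_rfl
  | cons a w ih =>
    by_cases hak : a = k
    · simp [trunc, hak]
    · simpa [trunc, hak] using ih.trans (List.suffix_cons a w)

theorem trunc_filterGE (w : List (Fin n)) :
    trunc k (filterGE k w) = filterGE k (trunc k w) := by
  induction w with
  | nil => rfl
  | cons a w ih =>
    by_cases hak : a = k
    · simp [filterGE, trunc, hak]
    · by_cases hka : k ≤ a <;> simpa [filterGE, trunc, List.filter_cons, hak, hka] using ih

theorem le_of_mem_filterGE {a : Fin n} {w : List (Fin n)} (h : a ∈ filterGE k w) : k ≤ a := by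
  simpa using (List.mem_filter.1 h).2

theorem KisStep.mem_iff {x y : List (Fin n)} (h : KisStep x y) (a : Fin n) :
    a ∈ x ↔ a ∈ y := by
  cases h <;> simp only [List.mem_append, List.mem_cons, List.not_mem_nil] <;> tauto

theorem KisEquiv.mem_iff {x y : List (Fin n)} (h : KisEquiv x y) (a : Fin n) :
    a ∈ x ↔ a ∈ y := by
  induction h with
  | rel _ _ h => exact h.mem_iff a
  | refl => rfl
  | symm _ _ _ ih => exact ih.symm
  | trans _ _ _ _ _ ih₁ ih₂ => exact ih₁.trans ih₂

theorem KisStep.reflGen_trunc {x y : List (Fin n)} (h : KisStep x y) (hx : ∀ a ∈ x, k ≤ a) :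
    ReflGen KisStep (trunc k x) (trunc k y) := by
  cases h with
  | idem u v i =>
    by_cases hku : k ∈ u
    · simp only [List.append_assoc, trunc_append_of_mem hku]
      exact .single (by simpa using KisStep.idem (trunc k u) v i)
    simp only [List.append_assoc, trunc_append_of_not_mem hku]
    by_cases hik : i = k
    · subst hik
      exact .single (by simpa [trunc] using KisStep.idem [] v i)
    · simp only [trunc, List.cons_append, if_neg hik]
      exact .refl
  | left u v i j hij =>
    by_cases hku : k ∈ u
    · simp only [List.append_assoc, trunc_append_of_mem hku]
      exact .single (by simpa using KisStep.left (trunc k u) v i j hij)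
    simp only [List.append_assoc, trunc_append_of_not_mem hku]
    by_cases hik : i = k
    · subst hik
      exact .single (by simpa [trunc] using KisStep.left [] v i j hij)
    · have hjk : j ≠ k := (lt_of_le_of_lt (hx i (by simp)) hij).ne'
      simp only [trunc, List.cons_append, if_neg hik, if_neg hjk]
      exact .refl
  | right u v i j hij =>
    by_cases hku : k ∈ u
    · simp only [List.append_assoc, trunc_append_of_mem hku]
      exact .single (by simpa using KisStep.right (trunc k u) v i j hij)
    · have hjk : j ≠ k := (lt_of_le_of_lt (hx i (by simp)) hij).ne'
      simp only [List.append_assoc, trunc_append_of_not_mem hku, trunc, List.cons_append,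
        if_neg hjk]
      exact .refl

theorem KisEquiv.trunc {x y : List (Fin n)} (h : KisEquiv x y) (hx : ∀ a ∈ x, k ≤ a) :
    KisEquiv (_root_.trunc k x) (_root_.trunc k y) := by
  induction h with
  | rel _ _ h => exact EqvGen.reflGen_le_eqvGen _ _ _ (h.reflGen_trunc hx)
  | refl => exact .refl _
  | symm _ _ h ih => exact .symm _ _ (ih fun a ha => hx a ((KisEquiv.mem_iff h a).1 ha))
  | trans _ _ _ h _ ih₁ ih₂ =>
    exact .trans _ _ _ (ih₁ hx) (ih₂ fun a ha => hx a ((KisEquiv.mem_iff h a).2 ha))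

end Truncation

theorem Canonical.infix {c s : List (Fin n)} (hc : Canonical c) (hs : s <:+: c) : Canonical s :=
  fun i u h => hc i u (h.trans hs)

/-- `T_i Can_{{i,…,n}} w = Can_{{i,…,n}} T_i w`. -/
theorem stmt_12 {n : ℕ} (w c d : List (Fin n)) (i : Fin n)
    (hc : Canonical c) (hcw : KisEquiv c (filterGE i w))
    (hd : Canonical d) (hdw : KisEquiv d (filterGE i (trunc i w))) :
    trunc i c = d := by
  have hc_ge : ∀ a ∈ c, i ≤ a := fun a ha => le_of_mem_filterGE ((hcw.mem_iff a).1 ha)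
  have htrunc : KisEquiv (trunc i c) (filterGE i (trunc i w)) := by
    simpa [trunc_filterGE] using hcw.trunc hc_ge
  exact (hc.infix (trunc_suffix c).isInfix).eq_of_kisEquiv hd
    (.trans _ _ _ htrunc (.symm _ _ hdw))
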